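/- arXiv:math/0510162 — 2 statements merged into one kernel-verified Lean document; each statement's English description precedes it below -/
import Mathlib

section
/- Assume the Continuum Hypothesis. Then the group G is generated by a subspace X ⊆ G having the Menger property Ufin(O,O). -/
open Set Filter Topology

/-- `c` is an open cover of the space `X`. -/
def IsOpenCover {X : Type*} [TopologicalSpace X] (c : Set (Set X)) : Prop :=
  (∀ U ∈ c, IsOpen U) ∧ ⋃₀ c = Set.univ

/-- The Menger property `Ufin(O,O)`. -/
def MengerProp (X : Type*) [TopologicalSpace X] : Prop :=
  ∀ c : ℕ → Set (Set X), (∀ n, IsOpenCover (c n)) →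
    ∃ v : ℕ → Set (Set X), (∀ n, v n ⊆ c n ∧ (v n).Finite) ∧
      ∀ x : X, ∃ n : ℕ, x ∈ ⋃₀ v n

/-- The group `G ≤ {0,1}^(ℕ×ℕ)`. -/
def Gset : Set ((ℕ × ℕ) → ZMod 2) :=
  {x | ∀ j : ℕ, {i : ℕ | x (i, j) ≠ 0}.Finite}

/-- `g` is a finite sum of elements of `X`. -/
def IsFiniteSumOf (X : Set ((ℕ × ℕ) → ZMod 2)) (g : (ℕ × ℕ) → ZMod 2) : Prop :=
  ∃ l : List ((ℕ × ℕ) → ZMod 2), (∀ a ∈ l, a ∈ X) ∧ l.sum = g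

/-- `X` generates the group `G`. -/
def GeneratesG (X : Set ((ℕ × ℕ) → ZMod 2)) : Prop :=
  ∀ g ∈ Gset, IsFiniteSumOf X g

/-! Let `Q` be the countable set of finitely supported points. Under CH, list the elements of `G`
as `g_i` and the open sets containing `Q` as `W_i`, both indexed by `ω₁`. At stage `i` the Baire
category theorem, applied in the compact group of points supported inside the support of `g_i`
(where `Q` is dense), yields `z_i` such that `z_i` and `g_i + z_i` lie in the countably many `W_j`
with `j ≤ i`. Then `g_i = z_i + (g_i + z_i)`, and `X = Q ∪ {z_i, g_i + z_i}` is concentrated on `Q`: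
each `X \ W_j` is contained in the countably many points chosen before stage `j`. A space
concentrated on a countable set `Q` is Menger: taking one member of the `n`-th cover around the
`n`-th point of `Q` yields an open set containing `Q`, which misses only countably many points, and
these are caught in the same way by a second member of each cover. -/

open Set Function Filter TopologicalSpace
open scoped Cardinal

def finitelySupported (ι M : Type*) [Zero M] : Set (ι → M) := {x | (support x).Finite}

section SupportedIn

variable {ι M : Type*}

theorem finitelySupported_countable [Countable ι] [Countable M] [Zero M] :
    (finitelySupported ι M).Countable := by
  refine (countable_range (fun x : ι →₀ M => ⇑x)).mono fun x hx => ?_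
  exact ⟨Finsupp.ofSupportFinite x hx, rfl⟩

def supportedIn (M : Type*) [AddGroup M] (s : Set ι) : AddSubgroup (ι → M) where
  carrier := {x | support x ⊆ s}
  zero_mem' := by simp
  add_mem' hx hy := (support_add _ _).trans (union_subset hx hy)
  neg_mem' hx := by simpa [support_neg] using hx

variable [AddGroup M]

@[simp]
theorem mem_supportedIn {s : Set ι} {x : ι → M} : x ∈ supportedIn M s ↔ support x ⊆ s := Iff.rfl

variable [TopologicalSpace M]

theorem isClosed_supportedIn [T1Space M] (s : Set ι) :
    IsClosed (supportedIn M s : Set (ι → M)) := by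
  have : (supportedIn M s : Set (ι → M)) = ⋂ i ∈ sᶜ, {x | x i = 0} := by
    ext x
    simp [supportedIn, subset_def, not_imp_comm]
  rw [this]
  exact isClosed_biInter fun i _ => isClosed_singleton.preimage (continuous_apply i)

theorem dense_finitelySupported_supportedIn (s : Set ι) :
    Dense {x : supportedIn M s | (x : ι → M) ∈ finitelySupported ι M} := by
  classical
  intro x
  have htrunc : ∀ F : Finset ι, (F : Set ι).indicator x ∈ supportedIn M s :=
    fun F => by rw [mem_supportedIn, support_indicator]; exact inter_subset_right.trans x.2
  refine mem_closure_of_tendsto (f := fun F : Finset ι => (⟨_, htrunc F⟩ : supportedIn M s))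
    (b := atTop) ?_ (Eventually.of_forall fun F => ?_)
  · refine tendsto_subtype_rng.2 (tendsto_pi_nhds.2 fun i => ?_)
    refine tendsto_const_nhds.congr' ?_
    filter_upwards [eventually_ge_atTop {i}] with F hF
    simp [indicator_of_mem (show i ∈ (F : Set ι) by simpa using hF)]
  · exact F.finite_toSet.subset support_indicator_subset

end SupportedIn

theorem Dense.exists_mem_and_add_mem {K : Type*} [TopologicalSpace K] [AddGroup K]
    [ContinuousAdd K] [BaireSpace K] {D : Set K} (hD : Dense D) {S : Set (Set K)}
    (hS : S.Countable) (hSo : ∀ W ∈ S, IsOpen W) (hDS : ∀ W ∈ S, D ⊆ W) (a : K) :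
    ∃ z, ∀ W ∈ S, z ∈ W ∧ a + z ∈ W := by
  have : Nonempty K := ⟨a⟩
  let T := S ∪ (fun W => (a + ·) ⁻¹' W) '' S
  have hT : Dense (⋂₀ T) := by
    refine dense_sInter_of_isOpen ?_ (hS.union (hS.image _)) ?_
    · rintro _ (hW | ⟨W, hW, rfl⟩)
      exacts [hSo _ hW, (hSo W hW).preimage (continuous_const_add a)]
    · rintro _ (hW | ⟨W, hW, rfl⟩)
      exacts [hD.mono (hDS _ hW), (hD.mono (hDS W hW)).preimage (Homeomorph.addLeft a).isOpenMap]
  obtain ⟨z, hz⟩ := hT.nonempty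
  exact ⟨z, fun W hW => ⟨hz W (Or.inl hW), hz _ (Or.inr ⟨W, hW, rfl⟩)⟩⟩

theorem exists_mem_supportedIn_and_add_mem {ι M : Type*} [AddGroup M] [TopologicalSpace M]
    [IsTopologicalAddGroup M] [CompactSpace M] [T2Space M] (g : ι → M)
    {S : Set (Set (ι → M))} (hS : S.Countable) (hSo : ∀ W ∈ S, IsOpen W)
    (hDS : ∀ W ∈ S, finitelySupported ι M ⊆ W) :
    ∃ z ∈ supportedIn M (support g), ∀ W ∈ S, z ∈ W ∧ g + z ∈ W := by
  have : CompactSpace (supportedIn M (support g)) :=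
    isCompact_iff_compactSpace.mp (isClosed_supportedIn _).isCompact
  obtain ⟨z, hz⟩ := (dense_finitelySupported_supportedIn (support g)).exists_mem_and_add_mem
    (hS.image (Subtype.val ⁻¹' ·))
    (forall_mem_image.2 fun W hW => (hSo W hW).preimage continuous_subtype_val)
    (forall_mem_image.2 fun W hW x hx => hDS W hW hx) ⟨g, mem_supportedIn.2 subset_rfl⟩
  exact ⟨z, z.2, fun W hW => hz _ ⟨W, hW, rfl⟩⟩

def IsConcentratedOn {α : Type*} [TopologicalSpace α] (X Q : Set α) : Prop :=
  ∀ W, IsOpen W → Q ⊆ W → (X \ W).Countable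

theorem exists_finite_subsets_covering_of_countable {Y : Type*} {c : ℕ → Set (Set Y)}
    (hc : ∀ n, ⋃₀ c n = univ) {S : Set Y} (hS : S.Countable) :
    ∃ v : ℕ → Set (Set Y), (∀ n, v n ⊆ c n ∧ (v n).Finite) ∧ S ⊆ ⋃ n, ⋃₀ v n := by
  rcases S.eq_empty_or_nonempty with rfl | hne
  · exact ⟨fun _ => ∅, fun _ => ⟨empty_subset _, finite_empty⟩, empty_subset _⟩
  obtain ⟨q, rfl⟩ := hS.exists_eq_range hne
  have hU : ∀ n, ∃ U ∈ c n, q n ∈ U := fun n => (hc n).ge (mem_univ (q n))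
  choose U hUc hqU using hU
  exact ⟨fun n => {U n}, fun n => ⟨singleton_subset_iff.2 (hUc n), finite_singleton _⟩,
    range_subset_iff.2 fun n => mem_iUnion.2 ⟨n, by simpa using hqU n⟩⟩

theorem mengerProp_of_isConcentratedOn_univ {Y : Type*} [TopologicalSpace Y] {Q : Set Y}
    (hQ : Q.Countable) (h : IsConcentratedOn univ Q) : MengerProp Y := by
  intro c hc
  obtain ⟨v, hv, hQv⟩ := exists_finite_subsets_covering_of_countable (fun n => (hc n).2) hQ
  have hWo : IsOpen (⋃ n, ⋃₀ v n) :=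
    isOpen_iUnion fun n => isOpen_sUnion fun U hU => (hc n).1 U ((hv n).1 hU)
  obtain ⟨w, hw, hwcov⟩ :=
    exists_finite_subsets_covering_of_countable (fun n => (hc n).2) (h _ hWo hQv)
  refine ⟨fun n => v n ∪ w n, fun n => ⟨union_subset (hv n).1 (hw n).1, (hv n).2.union (hw n).2⟩,
    fun x => ?_⟩
  by_cases hx : x ∈ ⋃ n, ⋃₀ v n
  · obtain ⟨n, hn⟩ := mem_iUnion.1 hx
    exact ⟨n, sUnion_mono subset_union_left hn⟩
  · obtain ⟨n, hn⟩ := mem_iUnion.1 (hwcov ⟨mem_univ x, hx⟩)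
    exact ⟨n, sUnion_mono subset_union_right hn⟩

theorem IsConcentratedOn.univ_subtype {α : Type*} [TopologicalSpace α] {X Q : Set α}
    (h : IsConcentratedOn X Q) (hQX : Q ⊆ X) :
    IsConcentratedOn (univ : Set X) (Subtype.val ⁻¹' Q) := by
  intro W hW hQW
  obtain ⟨V, hV, rfl⟩ := isOpen_induced_iff.1 hW
  have hQV : Q ⊆ V := fun q hq => hQW (show (⟨q, hQX hq⟩ : X) ∈ Subtype.val ⁻¹' Q from hq)
  refine ((h V hV hQV).preimage Subtype.val_injective).mono ?_
  rintro x ⟨-, hx⟩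
  exact ⟨x.2, hx⟩

theorem IsConcentratedOn.mengerProp {α : Type*} [TopologicalSpace α] {X Q : Set α}
    (h : IsConcentratedOn X Q) (hQ : Q.Countable) (hQX : Q ⊆ X) : MengerProp X :=
  mengerProp_of_isConcentratedOn_univ (hQ.preimage Subtype.val_injective) (h.univ_subtype hQX)

theorem isConcentratedOn_self {α : Type*} [TopologicalSpace α] (Q : Set α) :
    IsConcentratedOn Q Q := fun _ _ hQW => by simp [sdiff_eq_empty.2 hQW]

theorem IsConcentratedOn.union {α : Type*} [TopologicalSpace α] {X Y Q : Set α}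
    (hX : IsConcentratedOn X Q) (hY : IsConcentratedOn Y Q) : IsConcentratedOn (X ∪ Y) Q :=
  fun W hW hQW => union_sdiff_distrib ▸ (hX W hW hQW).union (hY W hW hQW)

section Cardinality

open Cardinal

theorem mk_opens_le_continuum {α : Type*} [TopologicalSpace α] [SecondCountableTopology α] :
    #(Opens α) ≤ 𝔠 := by
  obtain ⟨B, hBc, -, hB⟩ := exists_countable_basis α
  have hinj : Injective fun U : Opens α => {b : B | (b : Set α) ⊆ U} := by
    intro U V h
    have key : ∀ s ∈ B, s ⊆ U ↔ s ⊆ V := fun s hs => Set.ext_iff.1 h ⟨s, hs⟩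
    ext1
    rw [hB.open_eq_sUnion' U.isOpen, hB.open_eq_sUnion' V.isOpen]
    congr 1
    ext s
    exact and_congr_right (key s)
  calc #(Opens α) ≤ #(Set B) := mk_le_of_injective hinj
    _ = 2 ^ #B := mk_set
    _ ≤ 2 ^ ℵ₀ := power_le_power_left two_ne_zero (mk_le_aleph0_iff.2 hBc.to_subtype)

theorem countable_Iio_toType_ord_aleph_one (i : (ℵ₁ : Cardinal).ord.ToType) : (Iio i).Countable :=
  le_aleph0_iff_set_countable.1 (lt_aleph_one_iff.1 (by simpa using mk_Iio_lt i (by simp)))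

theorem countable_range_diff_of_rank {I α β : Type*} [LinearOrder I]
    (hI : ∀ i : I, (Iio i).Countable) {U : β → Set α} (rank : β → I) {y : I → α}
    (hy : ∀ i b, rank b ≤ i → y i ∈ U b) (b : β) : (range y \ U b).Countable := by
  refine ((hI (rank b)).image y).mono ?_
  rintro _ ⟨⟨i, rfl⟩, hi⟩
  exact ⟨i, lt_of_not_ge fun h => hi (hy i b h), rfl⟩

end Cardinality

theorem supportedIn_support_subset_Gset {g : ℕ × ℕ → ZMod 2} (hg : g ∈ Gset) :
    (supportedIn (ZMod 2) (support g) : Set (ℕ × ℕ → ZMod 2)) ⊆ Gset :=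
  fun _ hx j => (hg j).subset fun _ hi => hx hi

theorem finitelySupported_subset_Gset : finitelySupported (ℕ × ℕ) (ZMod 2) ⊆ Gset :=
  fun _ hx j => hx.preimage (Prod.mk_left_injective j).injOn

open Cardinal in
theorem exists_isConcentratedOn_subset_Gset (hCH : (2 : Cardinal.{0}) ^ ℵ₀ = ℵ₁) :
    ∃ Y ⊆ Gset, IsConcentratedOn Y (finitelySupported (ℕ × ℕ) (ZMod 2)) ∧
      ∀ g ∈ Gset, ∃ z ∈ Y, g + z ∈ Y := by
  let Q := finitelySupported (ℕ × ℕ) (ZMod 2)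
  let I := (ℵ₁ : Cardinal.{0}).ord.ToType
  have hmkI : 𝔠 = #I := by simp [I, ← hCH]
  have : Nonempty Gset := ⟨⟨0, finitelySupported_subset_Gset (by simp [finitelySupported])⟩⟩
  obtain ⟨e, he⟩ : ∃ e : I → Gset, Surjective e := by
    have hmkE : #(ℕ × ℕ → ZMod 2) = 𝔠 := by simp
    obtain ⟨f⟩ := (le_def _ _).1 ((mk_set_le Gset).trans (hmkE.trans hmkI).le)
    exact ⟨invFun f, invFun_surjective f.injective⟩
  obtain ⟨r⟩ : Nonempty ({U : Opens (ℕ × ℕ → ZMod 2) // Q ⊆ U} ↪ I) :=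
    (le_def _ _).1 ((mk_subtype_le _).trans (mk_opens_le_continuum.trans hmkI.le))
  have hS : ∀ i, ((fun U => (U.1 : Set (ℕ × ℕ → ZMod 2))) '' (r ⁻¹' Iic i)).Countable :=
    fun i => ((Iio_insert (a := i) ▸ (countable_Iio_toType_ord_aleph_one i).insert i).preimage
      r.injective).image _
  choose z hzg hz using fun i => exists_mem_supportedIn_and_add_mem (e i : ℕ × ℕ → ZMod 2)
    (hS i) (forall_mem_image.2 fun U _ => U.1.isOpen) (forall_mem_image.2 fun U _ => U.2)
  have hconc : ∀ y : I → ℕ × ℕ → ZMod 2, (∀ i U, r U ≤ i → y i ∈ U.1) →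
      IsConcentratedOn (range y) Q := fun y hy W hW hQW =>
    countable_range_diff_of_rank countable_Iio_toType_ord_aleph_one r hy ⟨⟨W, hW⟩, hQW⟩
  have he_mem : ∀ i, (e i : ℕ × ℕ → ZMod 2) ∈ supportedIn (ZMod 2) (support (e i).1) :=
    fun i => mem_supportedIn.2 subset_rfl
  refine ⟨range z ∪ range fun i => e i + z i, ?_, ?_, fun g hg => ?_⟩
  · rintro _ (⟨i, rfl⟩ | ⟨i, rfl⟩)
    exacts [supportedIn_support_subset_Gset (e i).2 (hzg i),
      supportedIn_support_subset_Gset (e i).2 (add_mem (he_mem i) (hzg i))]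
  · exact (hconc z fun i U h => (hz i _ ⟨U, h, rfl⟩).1).union
      (hconc _ fun i U h => (hz i _ ⟨U, h, rfl⟩).2)
  · obtain ⟨i, hi⟩ := he ⟨g, hg⟩
    exact ⟨z i, Or.inl ⟨i, rfl⟩, Or.inr ⟨i, by simp [hi]⟩⟩

/-- Under CH, the group `G` is generated by a subspace with the Menger property. -/
theorem stmt_11 (hCH : (2 : Cardinal) ^ Cardinal.aleph0 = Cardinal.aleph 1) :
    ∃ X : Set ((ℕ × ℕ) → ZMod 2), X ⊆ Gset ∧ MengerProp ↥X ∧ GeneratesG X := by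
  have hCH₀ : (2 : Cardinal.{0}) ^ ℵ₀ = ℵ₁ := by
    rw [← Cardinal.lift_inj]
    simpa using hCH
  obtain ⟨Y, hYG, hYQ, hYgen⟩ := exists_isConcentratedOn_subset_Gset hCH₀
  refine ⟨_ ∪ Y, union_subset finitelySupported_subset_Gset hYG,
    ((isConcentratedOn_self _).union hYQ).mengerProp finitelySupported_countable subset_union_left,
    fun g hg => ?_⟩
  obtain ⟨z, hz, hgz⟩ := hYgen g hg
  refine ⟨[z, g + z], by simp [hz, hgz], ?_⟩
  rw [List.sum_pair, add_comm g, CharTwo.add_cancel_left]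
end

section
/- The space G = {x ∈ {0,1}^{ℕ×ℕ} : for every j ∈ ℕ, x_{i,j} = 0 for all but finitely many i ∈ ℕ}, with the subspace topology inherited from the product topology on {0,1}^{ℕ×ℕ} ({0,1} discrete), does not have the Menger property Ufin(O,O). -/
open Set Filter Topology

/-- Basic clopen set: members of `G` whose `(k,n)` entry is `0`. -/
def Uset (n k : ℕ) : Set ↥Gset := {x | (x : (ℕ × ℕ) → ZMod 2) (k, n) = 0}

lemma Uset_injective (n : ℕ) : Function.Injective (Uset n) := by
  intro k k' h
  by_contra hkk
  -- the indicator of {(k', n)} lies in G, is in `Uset n k` but not in `Uset n k'`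
  classical
  have hy : (fun p : ℕ × ℕ => if p = (k', n) then (1 : ZMod 2) else 0) ∈ Gset := by
    intro j
    apply Set.Finite.subset (Set.finite_singleton k')
    intro i hi
    simp only [Set.mem_setOf_eq] at hi
    by_contra hik
    have : ((i, j) : ℕ × ℕ) ≠ (k', n) := by
      intro hc; exact hik (by simpa using congrArg Prod.fst hc)
    simp [this] at hi
  set y : ↥Gset := ⟨_, hy⟩
  have h1 : y ∈ Uset n k := by
    show (if ((k, n) : ℕ × ℕ) = (k', n) then (1 : ZMod 2) else 0) = 0
    have : ((k, n) : ℕ × ℕ) ≠ (k', n) := by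
      intro hc; exact hkk (by simpa using congrArg Prod.fst hc)
    simp [this]
  have h2 : y ∉ Uset n k' := by
    show ¬ (if ((k', n) : ℕ × ℕ) = (k', n) then (1 : ZMod 2) else 0) = 0
    simp
  rw [h] at h1
  exact h2 h1

/-- `G`, as a subspace of the Cantor cube, does not have the Menger property. -/
theorem stmt_16 : ¬ MengerProp ↥Gset := by
  classical
  intro h
  obtain ⟨v, hv, hcov⟩ := h (fun n => Set.range (Uset n)) (by
    intro n
    constructor
    · rintro U ⟨k, rfl⟩
      have hcont : Continuous fun x : ↥Gset => (x : (ℕ × ℕ) → ZMod 2) (k, n) :=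
        (continuous_apply ((k, n) : ℕ × ℕ)).comp continuous_subtype_val
      exact hcont.isOpen_preimage {0} (isOpen_discrete _)
    · ext x
      simp only [Set.mem_sUnion, Set.mem_range, Set.mem_univ, iff_true]
      have hfin := x.2 n
      have : {i : ℕ | (x : (ℕ × ℕ) → ZMod 2) (i, n) ≠ 0} ≠ Set.univ := by
        intro hu
        exact Set.infinite_univ (hu ▸ hfin)
      obtain ⟨k, hk⟩ : ∃ k, ¬ (x : (ℕ × ℕ) → ZMod 2) (k, n) ≠ 0 := by
        by_contra hall
        push_neg at hall
        exact this (Set.eq_univ_of_forall hall)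
      exact ⟨Uset n k, ⟨k, rfl⟩, not_not.mp hk⟩)
  -- the finitely many indices used at stage n
  set K : ℕ → Set ℕ := fun n => Uset n ⁻¹' (v n) with hK
  have hKfin : ∀ n, (K n).Finite := fun n =>
    Set.Finite.preimage (Set.injOn_of_injective (Uset_injective n)) (hv n).2
  -- the diagonal point
  have hxG : (fun p : ℕ × ℕ => if p.1 ∈ K p.2 then (1 : ZMod 2) else 0) ∈ Gset := by
    intro j
    apply Set.Finite.subset (hKfin j)
    intro i hi
    simp only [Set.mem_setOf_eq] at hi
    by_contra hik
    simp [hik] at hi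
  obtain ⟨n, hn⟩ := hcov ⟨_, hxG⟩
  obtain ⟨V, hV, hxV⟩ := hn
  obtain ⟨k, rfl⟩ := (hv n).1 hV
  have hk : k ∈ K n := hV
  have : (if k ∈ K n then (1 : ZMod 2) else 0) = 0 := hxV
  rw [if_pos hk] at this
  exact one_ne_zero this
end
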